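/- arXiv:2106.15358 — 2 statements merged into one kernel-verified Lean document; each statement's English description precedes it below -/
import Mathlib

section
/- Let A ∈ ℝ^{m×n} be any matrix, let x, p, q ∈ ℝ^n, let η ∈ ℝ^m, let y = |Ax| + η, and let τ ≥ 0. If ‖y − |Aq|‖₂² ≤ ‖y − |Ap|‖₂² + τ, then ‖|Ap| − |Aq|‖₂² ≤ 2 (‖η‖₂ + ‖A(p − x)‖₂) · ‖A(q − p)‖₂ + τ. -/
open MeasureTheory Matrix

/-- The squared-sum Euclidean (ℓ₂) norm of a vector in `Fin d → ℝ`. -/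
noncomputable def l2norm {d : ℕ} (v : Fin d → ℝ) : ℝ := Real.sqrt (∑ i, (v i) ^ 2)

lemma l2norm_sq {d : ℕ} (v : Fin d → ℝ) : (l2norm v) ^ 2 = ∑ i, (v i) ^ 2 := by
  rw [l2norm, Real.sq_sqrt]
  positivity

lemma l2norm_nonneg' {d : ℕ} (v : Fin d → ℝ) : 0 ≤ l2norm v := Real.sqrt_nonneg _

lemma l2norm_mono {d : ℕ} {v w : Fin d → ℝ} (h : ∀ i, |v i| ≤ |w i|) :
    l2norm v ≤ l2norm w := by
  apply Real.sqrt_le_sqrt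
  apply Finset.sum_le_sum
  intro i _
  rw [← sq_abs (v i), ← sq_abs (w i)]
  exact pow_le_pow_left₀ (abs_nonneg _) (h i) 2

lemma l2norm_cs {d : ℕ} (f g : Fin d → ℝ) : ∑ i, f i * g i ≤ l2norm f * l2norm g := by
  rw [l2norm, l2norm, ← Real.sqrt_mul (by positivity)]
  calc ∑ i, f i * g i ≤ |∑ i, f i * g i| := le_abs_self _
    _ = Real.sqrt ((∑ i, f i * g i) ^ 2) := (Real.sqrt_sq_eq_abs _).symm
    _ ≤ Real.sqrt ((∑ i, f i ^ 2) * ∑ i, g i ^ 2) :=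
        Real.sqrt_le_sqrt (Finset.sum_mul_sq_le_sq_mul_sq _ _ _)

/-- Deterministic inequality: for any matrix `A ∈ ℝ^{m×n}` (given by its rows
`a 1, …, a m`), vectors `x, p, q ∈ ℝ^n`, noise `η ∈ ℝ^m`, measurements
`y = |Ax| + η`, and `τ ≥ 0`: if `‖y − |Aq|‖₂² ≤ ‖y − |Ap|‖₂² + τ`, then
`‖|Ap| − |Aq|‖₂² ≤ 2(‖η‖₂ + ‖A(p−x)‖₂)·‖A(q−p)‖₂ + τ`. -/
theorem stmt_10 (m n : ℕ) (a : Fin m → Fin n → ℝ) (x p q : Fin n → ℝ)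
    (η : Fin m → ℝ) (τ : ℝ) (hτ : 0 ≤ τ)
    (h : (l2norm fun i => (|a i ⬝ᵥ x| + η i) - |a i ⬝ᵥ q|) ^ 2 ≤
          (l2norm fun i => (|a i ⬝ᵥ x| + η i) - |a i ⬝ᵥ p|) ^ 2 + τ) :
    (l2norm fun i => |a i ⬝ᵥ p| - |a i ⬝ᵥ q|) ^ 2 ≤
      2 * (l2norm η + l2norm fun i => a i ⬝ᵥ (p - x)) *
        (l2norm fun i => a i ⬝ᵥ (q - p)) + τ := by
  set b : Fin m → ℝ := fun i => |a i ⬝ᵥ p| with hb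
  set c : Fin m → ℝ := fun i => |a i ⬝ᵥ q| with hc
  set u : Fin m → ℝ := fun i => |a i ⬝ᵥ x| with hu
  have h' : ∑ i, (u i + η i - c i) ^ 2 ≤ (∑ i, (u i + η i - b i) ^ 2) + τ := by
    rw [← l2norm_sq, ← l2norm_sq]; exact h
  have expand : (∑ i, (u i + η i - c i) ^ 2) - (∑ i, (u i + η i - b i) ^ 2)
        - (∑ i, (b i - c i) ^ 2)
        + 2 * ((∑ i, (b i - c i) * (b i - u i)) + ∑ i, (b i - c i) * (-η i)) = 0 := by
    rw [mul_add, Finset.mul_sum, Finset.mul_sum, ← Finset.sum_sub_distrib,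
      ← Finset.sum_sub_distrib, ← Finset.sum_add_distrib, ← Finset.sum_add_distrib]
    apply Finset.sum_eq_zero
    intro i _
    ring
  have key : ∑ i, (b i - c i) ^ 2 ≤ τ +
      2 * ((∑ i, (b i - c i) * (b i - u i)) + ∑ i, (b i - c i) * (-η i)) := by
    linarith
  have hbc : l2norm (fun i => b i - c i) ≤ l2norm (fun i => a i ⬝ᵥ (q - p)) := by
    apply l2norm_mono
    intro i
    simp only [hb, hc]
    rw [dotProduct_sub]
    calc abs (abs (a i ⬝ᵥ p) - abs (a i ⬝ᵥ q)) ≤ |a i ⬝ᵥ p - a i ⬝ᵥ q| :=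
          abs_abs_sub_abs_le_abs_sub _ _
      _ = |a i ⬝ᵥ q - a i ⬝ᵥ p| := abs_sub_comm _ _
  have hbu : l2norm (fun i => b i - u i) ≤ l2norm (fun i => a i ⬝ᵥ (p - x)) := by
    apply l2norm_mono
    intro i
    simp only [hb, hu]
    rw [dotProduct_sub]
    exact abs_abs_sub_abs_le_abs_sub _ _
  have hηeq : l2norm (fun i => -η i) = l2norm η := by
    unfold l2norm; congr 1; apply Finset.sum_congr rfl; intro i _; ring
  have cs1 : ∑ i, (b i - c i) * (b i - u i) ≤
      l2norm (fun i => a i ⬝ᵥ (q - p)) * l2norm (fun i => a i ⬝ᵥ (p - x)) := by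
    calc ∑ i, (b i - c i) * (b i - u i)
        ≤ l2norm (fun i => b i - c i) * l2norm (fun i => b i - u i) := l2norm_cs _ _
      _ ≤ l2norm (fun i => a i ⬝ᵥ (q - p)) * l2norm (fun i => a i ⬝ᵥ (p - x)) :=
          mul_le_mul hbc hbu (l2norm_nonneg' _) (l2norm_nonneg' _)
  have cs2 : ∑ i, (b i - c i) * (-η i) ≤
      l2norm (fun i => a i ⬝ᵥ (q - p)) * l2norm η := by
    calc ∑ i, (b i - c i) * (-η i)
        ≤ l2norm (fun i => b i - c i) * l2norm (fun i => -η i) := l2norm_cs _ _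
      _ = l2norm (fun i => b i - c i) * l2norm η := by rw [hηeq]
      _ ≤ l2norm (fun i => a i ⬝ᵥ (q - p)) * l2norm η :=
          mul_le_mul_of_nonneg_right hbc (l2norm_nonneg' _)
  rw [l2norm_sq]
  have := l2norm_nonneg' (fun i => a i ⬝ᵥ (q - p))
  nlinarith [key, cs1, cs2]
end

section
/- Let A ∈ ℝ^{m×n} have i.i.d. standard normal entries and let x ∈ ℝ^n be a fixed vector. Then for any ε ∈ (0,1): P( (1−ε)‖x‖₂² ≤ ‖(1/√m) A x‖₂² ≤ (1+ε)‖x‖₂² ) ≥ 1 − 2 e^{−ε²(1−ε)m/4}. -/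
open MeasureTheory ProbabilityTheory Matrix

/-- `A : Ω → ℝ^{m×n}` (given through its rows) has i.i.d. standard normal entries:
its distribution is the product of `m·n` standard Gaussians. -/
def IIDStdGaussian {Ω : Type} [MeasurableSpace Ω] (P : Measure Ω) (m n : ℕ)
    (A : Ω → Fin m → Fin n → ℝ) : Prop :=
  Measure.map A P = Measure.pi fun _ : Fin m => Measure.pi fun _ : Fin n => gaussianReal 0 1

open Real

/-!
Row `i` of `A` pairs with `x` to give `(A x)ᵢ ~ N(0, ‖x‖²)`, independently over the rows,
so `‖A x‖² / ‖x‖²` is a sum of `m` squared standard Gaussians. Since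
`E[exp (t Z²)] = (1 - 2t)^(-1/2)` for `t < 1/2`, the Chernoff bound at the optimal `t` gives
the tails `((1 + ε) e^(-ε))^(m/2)` and `((1 - ε) e^ε)^(m/2)`, and both are at most
`exp (-ε²(1 - ε)m/4)` because `log (1 + ε) ≤ ε - ε²/2 + ε³/2` and
`log (1 - ε) ≤ -ε - ε²/2`.
-/

lemma sqrt_one_add_mul_exp_le {ε : ℝ} (hε : 0 ≤ ε) :
    √(1 + ε) * exp (-ε / 2) ≤ exp (-(ε ^ 2 * (1 - ε) / 4)) := by
  have hy : 0 ≤ ε - ε ^ 2 * (1 - ε) / 2 := by nlinarith [sq_nonneg (ε - 1)]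
  have key : 1 + ε ≤ exp (ε - ε ^ 2 * (1 - ε) / 2) := by
    nlinarith [quadratic_le_exp_of_nonneg hy, pow_nonneg hε 4, pow_nonneg hε 5,
      sq_nonneg (ε - 1)]
  calc √(1 + ε) * exp (-ε / 2) ≤ exp ((ε - ε ^ 2 * (1 - ε) / 2) / 2) * exp (-ε / 2) := by
        gcongr; rw [exp_half]; exact sqrt_le_sqrt key
    _ = exp (-(ε ^ 2 * (1 - ε) / 4)) := by rw [← exp_add]; ring_nf

lemma log_one_sub_le {ε : ℝ} (h0 : 0 ≤ ε) (h1 : ε < 1) :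
    log (1 - ε) ≤ -ε - ε ^ 2 / 2 := by
  have hsum := hasSum_pow_div_log_of_abs_lt_one (abs_lt.2 ⟨by linarith, h1⟩)
  have := sum_le_hasSum (Finset.range 2) (fun n _ => by positivity) hsum
  norm_num [Finset.sum_range_succ] at this
  linarith

lemma sqrt_one_sub_mul_exp_le {ε : ℝ} (h0 : 0 ≤ ε) (h1 : ε < 1) :
    √(1 - ε) * exp (ε / 2) ≤ exp (-(ε ^ 2 * (1 - ε) / 4)) := by
  have key : 1 - ε ≤ exp (-ε - ε ^ 2 * (1 - ε) / 2) := by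
    calc 1 - ε = exp (log (1 - ε)) := (exp_log (by linarith)).symm
      _ ≤ _ := exp_le_exp.2 (by nlinarith [log_one_sub_le h0 h1])
  calc √(1 - ε) * exp (ε / 2) ≤ exp ((-ε - ε ^ 2 * (1 - ε) / 2) / 2) * exp (ε / 2) := by
        gcongr; rw [exp_half]; exact sqrt_le_sqrt key
    _ = exp (-(ε ^ 2 * (1 - ε) / 4)) := by rw [← exp_add]; ring_nf

lemma gaussianPDFReal_mul_exp_mul_sq (t u : ℝ) :
    gaussianPDFReal 0 1 u * exp (t * u ^ 2) = (√(2 * π))⁻¹ * exp (-(1 / 2 - t) * u ^ 2) := by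
  rw [gaussianPDFReal, mul_assoc, ← exp_add, NNReal.coe_one, mul_one]
  congr 2
  ring

lemma integrable_exp_mul_sq_gaussianReal {t : ℝ} (ht : t < 1 / 2) :
    Integrable (fun u => exp (t * u ^ 2)) (gaussianReal 0 1) := by
  rw [gaussianReal_of_var_ne_zero 0 one_ne_zero,
    integrable_withDensity_iff_integrable_smul' (measurable_gaussianPDF 0 1)
      (ae_of_all _ fun _ => gaussianPDF_lt_top)]
  simp_rw [toReal_gaussianPDF, smul_eq_mul, gaussianPDFReal_mul_exp_mul_sq]
  exact (integrable_exp_neg_mul_sq (by linarith)).const_mul _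

lemma mgf_sq_gaussianReal {t : ℝ} (ht : t < 1 / 2) :
    mgf (· ^ 2) (gaussianReal 0 1) t = (√(1 - 2 * t))⁻¹ := by
  rw [mgf, integral_gaussianReal_eq_integral_smul one_ne_zero]
  simp_rw [smul_eq_mul, gaussianPDFReal_mul_exp_mul_sq, integral_const_mul, integral_gaussian,
    ← sqrt_inv, ← sqrt_mul (inv_nonneg.2 (by positivity : (0:ℝ) ≤ 2 * π))]
  congr 1
  have : 1 - 2 * t ≠ 0 := by linarith
  field_simp

section SumSq

variable {ι : Type*} [Fintype ι] {t : ℝ}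

lemma exp_mul_sum_sq (t : ℝ) (y : ι → ℝ) :
    exp (t * ∑ i, y i ^ 2) = ∏ i, exp (t * y i ^ 2) := by
  rw [Finset.mul_sum, exp_sum]

lemma integrable_exp_mul_sum_sq_pi_gaussianReal (ht : t < 1 / 2) :
    Integrable (fun y : ι → ℝ => exp (t * ∑ i, y i ^ 2))
      (Measure.pi fun _ => gaussianReal 0 1) := by
  simp_rw [exp_mul_sum_sq]
  exact Integrable.fintype_prod fun _ => integrable_exp_mul_sq_gaussianReal ht

lemma mgf_sum_sq_pi_gaussianReal (ht : t < 1 / 2) :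
    mgf (fun y : ι → ℝ => ∑ i, y i ^ 2) (Measure.pi fun _ => gaussianReal 0 1) t =
      (√(1 - 2 * t))⁻¹ ^ Fintype.card ι := by
  simp_rw [mgf, exp_mul_sum_sq, integral_fintype_prod_eq_pow (fun u => exp (t * u ^ 2))]
  rw [← mgf, mgf_sq_gaussianReal ht]

lemma measureReal_sum_sq_ge_le {ε : ℝ} (hε : 0 ≤ ε) :
    (Measure.pi fun _ : ι => gaussianReal 0 1).real
        {y | (1 + ε) * Fintype.card ι ≤ ∑ i, y i ^ 2} ≤
      (√(1 + ε) * exp (-ε / 2)) ^ Fintype.card ι := by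
  -- `t = ε / (2(1 + ε))` minimises `exp (-t(1 + ε)k) (1 - 2t)^(-k/2)`.
  have ht : ε / (2 * (1 + ε)) < 1 / 2 := by
    rw [div_lt_div_iff₀ (by positivity) two_pos]; linarith
  refine (measure_ge_le_exp_mul_mgf _ (by positivity)
    (integrable_exp_mul_sum_sq_pi_gaussianReal ht)).trans_eq ?_
  have h1 : 1 - 2 * (ε / (2 * (1 + ε))) = (1 + ε)⁻¹ := by field_simp; ring
  rw [mgf_sum_sq_pi_gaussianReal ht, h1, sqrt_inv, inv_inv, mul_pow, mul_comm, ← exp_nat_mul]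
  congr 2
  field_simp

lemma measureReal_sum_sq_le_le {ε : ℝ} (h0 : 0 ≤ ε) (h1 : ε < 1) :
    (Measure.pi fun _ : ι => gaussianReal 0 1).real
        {y | ∑ i, y i ^ 2 ≤ (1 - ε) * Fintype.card ι} ≤
      (√(1 - ε) * exp (ε / 2)) ^ Fintype.card ι := by
  have hpos : 0 < 1 - ε := by linarith
  have ht : -(ε / (2 * (1 - ε))) < 1 / 2 := by
    have : 0 ≤ ε / (2 * (1 - ε)) := by positivity
    linarith
  refine (measure_le_le_exp_mul_mgf _ (neg_nonpos.2 (by positivity))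
    (integrable_exp_mul_sum_sq_pi_gaussianReal ht)).trans_eq ?_
  have h1 : 1 - 2 * -(ε / (2 * (1 - ε))) = (1 - ε)⁻¹ := by field_simp; ring
  rw [mgf_sum_sq_pi_gaussianReal ht, h1, sqrt_inv, inv_inv, mul_pow, mul_comm, ← exp_nat_mul]
  congr 2
  field_simp

lemma ofReal_le_measure_sum_sq_mem {ε : ℝ} (h0 : 0 ≤ ε) (h1 : ε < 1) :
    ENNReal.ofReal (1 - 2 * exp (-(ε ^ 2 * (1 - ε) * Fintype.card ι / 4))) ≤
      (Measure.pi fun _ : ι => gaussianReal 0 1)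
        {y | (1 - ε) * Fintype.card ι ≤ ∑ i, y i ^ 2 ∧
          ∑ i, y i ^ 2 ≤ (1 + ε) * Fintype.card ι} := by
  set μ := Measure.pi fun _ : ι => gaussianReal 0 1
  set k := Fintype.card ι
  set S := {y : ι → ℝ | (1 - ε) * k ≤ ∑ i, y i ^ 2 ∧ ∑ i, y i ^ 2 ≤ (1 + ε) * k}
  have hE : exp (-(ε ^ 2 * (1 - ε) * k / 4)) = exp (-(ε ^ 2 * (1 - ε) / 4)) ^ k := by
    rw [← exp_nat_mul]; ring_nf
  have hup : μ.real {y | (1 + ε) * k ≤ ∑ i, y i ^ 2} ≤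
      exp (-(ε ^ 2 * (1 - ε) * k / 4)) :=
    hE ▸ (measureReal_sum_sq_ge_le h0).trans
      (pow_le_pow_left₀ (by positivity) (sqrt_one_add_mul_exp_le h0) k)
  have hlow : μ.real {y | ∑ i, y i ^ 2 ≤ (1 - ε) * k} ≤
      exp (-(ε ^ 2 * (1 - ε) * k / 4)) :=
    hE ▸ (measureReal_sum_sq_le_le h0 h1).trans
      (pow_le_pow_left₀ (by positivity) (sqrt_one_sub_mul_exp_le h0 h1) k)
  have hS : MeasurableSet S := by
    have : Measurable fun y : ι → ℝ => ∑ i, y i ^ 2 := by fun_prop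
    exact (measurableSet_le measurable_const this).inter (measurableSet_le this measurable_const)
  have hcompl :
      Sᶜ ⊆ {y | ∑ i, y i ^ 2 ≤ (1 - ε) * k} ∪ {y | (1 + ε) * k ≤ ∑ i, y i ^ 2} := by
    intro y hy
    simp only [S, Set.mem_compl_iff, Set.mem_ofPred_eq, not_and_or, not_le] at hy
    exact hy.imp le_of_lt le_of_lt
  rw [← ofReal_measureReal]
  gcongr
  calc 1 - 2 * exp (-(ε ^ 2 * (1 - ε) * k / 4)) ≤ 1 - μ.real Sᶜ := by
        linarith [(measureReal_mono (μ := μ) hcompl).trans (measureReal_union_le _ _)]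
    _ = μ.real S := by rw [probReal_compl_eq_one_sub hS]; ring

end SumSq

lemma map_pi_gaussianReal_dotProduct {ι : Type*} [Fintype ι] (x : ι → ℝ) :
    (Measure.pi fun _ : ι => gaussianReal 0 1).map (· ⬝ᵥ x) =
      gaussianReal 0 (∑ i, x i ^ 2).toNNReal := by
  let L : StrongDual ℝ (EuclideanSpace ℝ ι) := innerSL ℝ (WithLp.toLp 2 x)
  have hL : (· ⬝ᵥ x) = L ∘ WithLp.toLp 2 := by
    ext z; simp [L, dotProduct, PiLp.inner_apply, mul_comm]
  rw [hL, ← Measure.map_map (by fun_prop) (by fun_prop), map_pi_eq_stdGaussian,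
    IsGaussian.map_eq_gaussianReal, integral_strongDual_stdGaussian, variance_dual_stdGaussian,
    innerSL_apply_norm, EuclideanSpace.real_norm_sq_eq]

lemma sq_l2norm {d : ℕ} (v : Fin d → ℝ) : l2norm v ^ 2 = ∑ i, v i ^ 2 :=
  sq_sqrt (Finset.sum_nonneg fun i _ => sq_nonneg (v i))

lemma measurable_l2norm {d : ℕ} : Measurable (l2norm : (Fin d → ℝ) → ℝ) := by
  unfold l2norm; fun_prop

lemma gaussianReal_eq_map_l2norm_mul {d : ℕ} (x : Fin d → ℝ) :
    gaussianReal 0 (∑ i, x i ^ 2).toNNReal = (gaussianReal 0 1).map (l2norm x * ·) := by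
  rw [gaussianReal_map_const_mul, mul_zero, mul_one, ← sq_l2norm]
  congr
  ext
  simp [sq_nonneg]

lemma IIDStdGaussian.map_mulVec {Ω : Type} [MeasurableSpace Ω] {P : Measure Ω} {m n : ℕ}
    {A : Ω → Fin m → Fin n → ℝ} (hiid : IIDStdGaussian P m n A) (hA : Measurable A)
    (x : Fin n → ℝ) :
    P.map (A · *ᵥ x) =
      (Measure.pi fun _ : Fin m => gaussianReal 0 1).map (fun y i => l2norm x * y i) := by
  change P.map ((fun B i => B i ⬝ᵥ x) ∘ A) = _
  rw [← Measure.map_map (by fun_prop) hA, hiid,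
    Measure.pi_map_pi (f := fun _ B => B ⬝ᵥ x) (fun _ => by fun_prop),
    map_pi_gaussianReal_dotProduct, gaussianReal_eq_map_l2norm_mul,
    Measure.pi_map_pi (fun _ => by fun_prop)]

def scaledSqNormNear (m : ℕ) (ε s : ℝ) : Set (Fin m → ℝ) :=
  {v | (1 - ε) * s ≤ (1 / √m * l2norm v) ^ 2 ∧ (1 / √m * l2norm v) ^ 2 ≤ (1 + ε) * s}

lemma measurableSet_scaledSqNormNear (m : ℕ) (ε s : ℝ) :
    MeasurableSet (scaledSqNormNear m ε s) := by
  have : Measurable fun v : Fin m → ℝ => (1 / √m * l2norm v) ^ 2 :=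
    (measurable_l2norm.const_mul _).pow_const 2
  exact (measurableSet_le measurable_const this).inter (measurableSet_le this measurable_const)

lemma setOf_sum_sq_mem_subset_preimage_scaledSqNormNear {m : ℕ} (hm : 0 < m) (ε c : ℝ) :
    {y : Fin m → ℝ | (1 - ε) * m ≤ ∑ i, y i ^ 2 ∧ ∑ i, y i ^ 2 ≤ (1 + ε) * m} ⊆
      (fun y i => c * y i) ⁻¹' scaledSqNormNear m ε (c ^ 2) := by
  rintro y ⟨hlow, hup⟩
  have hm' : (0 : ℝ) < m := by exact_mod_cast hm
  have hscale : (1 / √m * l2norm fun i => c * y i) ^ 2 = c ^ 2 * (∑ i, y i ^ 2) / m := by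
    rw [mul_pow, div_pow, one_pow, sq_sqrt hm'.le, sq_l2norm]
    simp_rw [mul_pow, ← Finset.mul_sum]
    ring
  simp only [scaledSqNormNear, Set.mem_preimage, Set.mem_ofPred_eq, hscale, le_div_iff₀ hm',
    div_le_iff₀ hm']
  constructor <;> nlinarith [sq_nonneg c]

/-- For a random matrix `A ∈ ℝ^{m×n}` with i.i.d. standard normal entries and a fixed
vector `x ∈ ℝ^n`, for any `ε ∈ (0,1)`:
`P((1−ε)‖x‖₂² ≤ ‖(1/√m) A x‖₂² ≤ (1+ε)‖x‖₂²) ≥ 1 − 2 e^{−ε²(1−ε)m/4}`. -/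
theorem stmt_16 (m n : ℕ) (Ω : Type) [MeasurableSpace Ω] (P : Measure Ω)
    [IsProbabilityMeasure P] (A : Ω → Fin m → Fin n → ℝ) (hA : Measurable A)
    (hiid : IIDStdGaussian P m n A) (x : Fin n → ℝ) (ε : ℝ) (hε0 : 0 < ε) (hε1 : ε < 1) :
    P {ω | (1 - ε) * l2norm x ^ 2 ≤
            ((1 / Real.sqrt m) * l2norm fun i => A ω i ⬝ᵥ x) ^ 2 ∧
           ((1 / Real.sqrt m) * l2norm fun i => A ω i ⬝ᵥ x) ^ 2 ≤
            (1 + ε) * l2norm x ^ 2} ≥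
      ENNReal.ofReal (1 - 2 * Real.exp (-(ε ^ 2 * (1 - ε) * m / 4))) := by
  rcases Nat.eq_zero_or_pos m with rfl | hm
  · rw [ge_iff_le, ENNReal.ofReal_of_nonpos (by norm_num)]
    exact bot_le
  have hchi := ofReal_le_measure_sum_sq_mem (ι := Fin m) hε0.le hε1
  rw [Fintype.card_fin] at hchi
  have hT := measurableSet_scaledSqNormNear m ε (l2norm x ^ 2)
  change _ ≤ P ((A · *ᵥ x) ⁻¹' scaledSqNormNear m ε (l2norm x ^ 2))
  rw [← Measure.map_apply (by fun_prop) hT, hiid.map_mulVec hA,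
    Measure.map_apply (by fun_prop) hT]
  exact hchi.trans (measure_mono (setOf_sum_sq_mem_subset_preimage_scaledSqNormNear hm ε _))
end
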